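/- Let D be an STS_2(v) invariant under A_{v,f}. Then the number of blocks of D that are fixed planes of type 7 equals (2^f - 1)(2^{f-1} - 1)/21, and the number of blocks of D that are fixed planes of type 1 equals (2^{v-f} - 1)/3. -/
import Mathlib


/-- The action of a matrix `A` on subspaces of `GF(2)^v`, induced by the
right action `x ↦ x ⬝ A` on vectors. -/
def mapMat {v : ℕ} (A : Matrix (Fin v) (Fin v) (ZMod 2))
    (W : Submodule (ZMod 2) (Fin v → ZMod 2)) : Submodule (ZMod 2) (Fin v → ZMod 2) :=
  W.map A.vecMulLinear

/-- A binary q-Steiner triple system `STS_2(v)`. -/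
def IsSTS (v : ℕ) (D : Set (Submodule (ZMod 2) (Fin v → ZMod 2))) : Prop :=
  (∀ B ∈ D, Module.finrank (ZMod 2) B = 3) ∧
  ∀ L : Submodule (ZMod 2) (Fin v → ZMod 2), Module.finrank (ZMod 2) L = 2 →
    ∃! B, B ∈ D ∧ L ≤ B

/-- The block-diagonal matrix `A_{v,f}` over `GF(2)`: `(v-f)/2` consecutive 2×2 blocks
`[[0,1],[1,1]]` on the diagonal, followed by the `f×f` identity matrix. -/
def Avf (v f : ℕ) : Matrix (Fin v) (Fin v) (ZMod 2) :=
  Matrix.of fun i j =>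
    if (i : ℕ) < v - f then
      if (i : ℕ) % 2 = 0 then (if (j : ℕ) = (i : ℕ) + 1 then 1 else 0)
      else (if (j : ℕ) = (i : ℕ) - 1 ∨ (j : ℕ) = (i : ℕ) then 1 else 0)
    else (if j = i then 1 else 0)

/-- A subspace is pointwise fixed by `A` (for a fixed plane: "of type 7") if every
1-dimensional subspace of it is fixed by `A`. -/
def PointwiseFixed {v : ℕ} (A : Matrix (Fin v) (Fin v) (ZMod 2))
    (E : Submodule (ZMod 2) (Fin v → ZMod 2)) : Prop :=
  ∀ P : Submodule (ZMod 2) (Fin v → ZMod 2),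
    Module.finrank (ZMod 2) P = 1 → P ≤ E → mapMat A P = P

section
variable {v f : ℕ}

noncomputable def phiA (v f : ℕ) : (Fin v → ZMod 2) →ₗ[ZMod 2] (Fin v → ZMod 2) :=
  (Avf v f).vecMulLinear

lemma phiA_apply (x : Fin v → ZMod 2) (j : Fin v) :
    phiA v f x j = ∑ i : Fin v, x i * Avf v f i j := by
  simp [phiA, Matrix.vecMulLinear_apply, Matrix.vecMul, dotProduct]

lemma phiA_ge (hvf : Even (v - f)) (x : Fin v → ZMod 2) (j : Fin v) (hj : ¬ (j : ℕ) < v - f) :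
    phiA v f x j = x j := by
  have hev : (v - f) % 2 = 0 := Nat.even_iff.1 hvf
  rw [phiA_apply, Finset.sum_eq_single j]
  · have : Avf v f j j = 1 := by
      simp only [Avf, Matrix.of_apply, Fin.ext_iff]
      split_ifs <;> first | rfl | (exfalso; omega)
    rw [this, mul_one]
  · intro i _ hij
    have hij' : (i : ℕ) ≠ (j : ℕ) := fun h => hij (Fin.ext h)
    have : Avf v f i j = 0 := by
      simp only [Avf, Matrix.of_apply, Fin.ext_iff]
      split_ifs <;> first | rfl | (exfalso; omega)
    rw [this, mul_zero]
  · simp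

lemma phiA_lt_even (hvf : Even (v - f)) (x : Fin v → ZMod 2) (j : Fin v)
    (hj : (j : ℕ) < v - f) (he : (j : ℕ) % 2 = 0) (hb : (j : ℕ) + 1 < v) :
    phiA v f x j = x ⟨(j : ℕ) + 1, hb⟩ := by
  have hev : (v - f) % 2 = 0 := Nat.even_iff.1 hvf
  rw [phiA_apply, Finset.sum_eq_single (⟨(j : ℕ) + 1, hb⟩ : Fin v)]
  · have : Avf v f ⟨(j : ℕ) + 1, hb⟩ j = 1 := by
      simp only [Avf, Matrix.of_apply, Fin.ext_iff]
      split_ifs <;> first | rfl | (exfalso; omega)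
    rw [this, mul_one]
  · intro i _ hij
    have hij' : (i : ℕ) ≠ (j : ℕ) + 1 := fun h => hij (Fin.ext h)
    have : Avf v f i j = 0 := by
      simp only [Avf, Matrix.of_apply, Fin.ext_iff]
      split_ifs <;> first | rfl | (exfalso; omega)
    rw [this, mul_zero]
  · simp

lemma phiA_lt_odd (hvf : Even (v - f)) (x : Fin v → ZMod 2) (j : Fin v)
    (hj : (j : ℕ) < v - f) (ho : (j : ℕ) % 2 = 1) (hb : (j : ℕ) - 1 < v) :
    phiA v f x j = x ⟨(j : ℕ) - 1, hb⟩ + x j := by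
  have hev : (v - f) % 2 = 0 := Nat.even_iff.1 hvf
  rw [phiA_apply, Finset.sum_eq_add (⟨(j : ℕ) - 1, hb⟩ : Fin v) j
      (by simp [Fin.ext_iff]; omega)]
  · congr 1
    · have : Avf v f ⟨(j : ℕ) - 1, hb⟩ j = 1 := by
        simp only [Avf, Matrix.of_apply, Fin.ext_iff]
        split_ifs <;> first | rfl | (exfalso; omega)
      rw [this, mul_one]
    · have : Avf v f j j = 1 := by
        simp only [Avf, Matrix.of_apply]
        rw [if_pos hj, if_neg (by omega)]
        simp
      rw [this, mul_one]
  · intro i _ hi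
    have hia : (i : ℕ) ≠ (j : ℕ) - 1 := fun h => hi.1 (Fin.ext h)
    have hib : (i : ℕ) ≠ (j : ℕ) := fun h => hi.2 (Fin.ext h)
    have : Avf v f i j = 0 := by
      simp only [Avf, Matrix.of_apply, Fin.ext_iff]
      split_ifs <;> first | rfl | (exfalso; omega)
    rw [this, mul_zero]
  · simp
  · simp

lemma phi_even' (hvf : Even (v - f)) (x : Fin v → ZMod 2) (j : Fin v)
    (hj : (j : ℕ) < v - f) (he : (j : ℕ) % 2 = 0) (hb : (j : ℕ) + 1 < v) :
    phiA v f x ⟨(j : ℕ) + 1, hb⟩ = x j + x ⟨(j : ℕ) + 1, hb⟩ := by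
  have hev : (v - f) % 2 = 0 := Nat.even_iff.1 hvf
  have h1 : ((⟨(j : ℕ) + 1, hb⟩ : Fin v) : ℕ) < v - f := by simp; omega
  have h2 : ((⟨(j : ℕ) + 1, hb⟩ : Fin v) : ℕ) % 2 = 1 := by simp; omega
  rw [phiA_lt_odd hvf x _ h1 h2 (by simp only [Fin.val_mk]; omega)]
  have e : (⟨((⟨(j : ℕ) + 1, hb⟩ : Fin v) : ℕ) - 1, by simp only [Fin.val_mk]; omega⟩ : Fin v) = j :=
    Fin.ext (by simp)
  rw [e]

lemma phi_phi_phi (hvf : Even (v - f)) (x : Fin v → ZMod 2) :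
    phiA v f (phiA v f (phiA v f x)) = x := by
  have hev : (v - f) % 2 = 0 := Nat.even_iff.1 hvf
  funext j
  have hjv := j.isLt
  by_cases hj : (j : ℕ) < v - f
  · have hvfv : v - f ≤ v := Nat.sub_le v f
    by_cases he : (j : ℕ) % 2 = 0
    · have hb : (j : ℕ) + 1 < v := by omega
      rw [phiA_lt_even hvf _ j hj he hb, phi_even' hvf _ j hj he hb,
        phiA_lt_even hvf _ j hj he hb, phi_even' hvf _ j hj he hb]
      generalize x j = a; generalize x ⟨(j : ℕ) + 1, hb⟩ = b
      revert a b; decide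
    · -- j odd; let j0 = j - 1
      have hb0 : (j : ℕ) - 1 < v := by omega
      set j0 : Fin v := ⟨(j : ℕ) - 1, hb0⟩ with hj0
      have hj0lt : (j0 : ℕ) < v - f := by simp [hj0]; omega
      have hj0e : (j0 : ℕ) % 2 = 0 := by simp [hj0]; omega
      have hb1 : (j0 : ℕ) + 1 < v := by simp [hj0]; omega
      have hjeq : (⟨(j0 : ℕ) + 1, hb1⟩ : Fin v) = j := Fin.ext (by simp [hj0]; omega)
      have key : ∀ y : Fin v → ZMod 2, phiA v f y j = y j0 + y j := by
        intro y
        have := phi_even' hvf y j0 hj0lt hj0e hb1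
        rwa [hjeq] at this
      have key0 : ∀ y : Fin v → ZMod 2, phiA v f y j0 = y j := by
        intro y
        have := phiA_lt_even hvf y j0 hj0lt hj0e hb1
        rwa [hjeq] at this
      rw [key, key, key0, key, key0]
      generalize x j0 = a; generalize x j = b
      revert a b; decide
  · rw [phiA_ge hvf (phiA v f (phiA v f x)) j hj, phiA_ge hvf (phiA v f x) j hj,
      phiA_ge hvf x j hj]

lemma pi_apply (hvf : Even (v - f)) (x : Fin v → ZMod 2) (j : Fin v) :
    (x + phiA v f x + phiA v f (phiA v f x)) j
      = if (j : ℕ) < v - f then 0 else x j := by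
  have hev : (v - f) % 2 = 0 := Nat.even_iff.1 hvf
  have hjv := j.isLt
  simp only [Pi.add_apply]
  by_cases hj : (j : ℕ) < v - f
  · rw [if_pos hj]
    by_cases he : (j : ℕ) % 2 = 0
    · have hb : (j : ℕ) + 1 < v := by omega
      rw [phiA_lt_even hvf _ j hj he hb, phiA_lt_even hvf _ j hj he hb,
        phi_even' hvf _ j hj he hb]
      generalize x j = a; generalize x ⟨(j : ℕ) + 1, hb⟩ = b
      revert a b; decide
    · have hb0 : (j : ℕ) - 1 < v := by omega
      set j0 : Fin v := ⟨(j : ℕ) - 1, hb0⟩ with hj0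
      have hj0lt : (j0 : ℕ) < v - f := by simp [hj0]; omega
      have hj0e : (j0 : ℕ) % 2 = 0 := by simp [hj0]; omega
      have hb1 : (j0 : ℕ) + 1 < v := by simp [hj0]; omega
      have hjeq : (⟨(j0 : ℕ) + 1, hb1⟩ : Fin v) = j := Fin.ext (by simp [hj0]; omega)
      have key : ∀ y : Fin v → ZMod 2, phiA v f y j = y j0 + y j := by
        intro y
        have := phi_even' hvf y j0 hj0lt hj0e hb1
        rwa [hjeq] at this
      have key0 : ∀ y : Fin v → ZMod 2, phiA v f y j0 = y j := by
        intro y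
        have := phiA_lt_even hvf y j0 hj0lt hj0e hb1
        rwa [hjeq] at this
      rw [key, key, key0, key]
      generalize x j0 = a; generalize x j = b
      revert a b; decide
  · rw [if_neg hj, phiA_ge hvf (phiA v f x) j hj, phiA_ge hvf x j hj]
    generalize x j = a
    revert a; decide

def FixS (v f : ℕ) : Submodule (ZMod 2) (Fin v → ZMod 2) where
  carrier := {x | ∀ j : Fin v, (j : ℕ) < v - f → x j = 0}
  add_mem' := fun hx hy j hj => by simp [hx j hj, hy j hj]
  zero_mem' := fun j _ => rfl
  smul_mem' := fun c x hx j hj => by simp [hx j hj]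

def V0S (v f : ℕ) : Submodule (ZMod 2) (Fin v → ZMod 2) where
  carrier := {x | ∀ j : Fin v, ¬ (j : ℕ) < v - f → x j = 0}
  add_mem' := fun hx hy j hj => by simp [hx j hj, hy j hj]
  zero_mem' := fun j _ => rfl
  smul_mem' := fun c x hx j hj => by simp [hx j hj]

lemma mem_FixS {x : Fin v → ZMod 2} :
    x ∈ FixS v f ↔ ∀ j : Fin v, (j : ℕ) < v - f → x j = 0 := Iff.rfl

lemma mem_V0S {x : Fin v → ZMod 2} :
    x ∈ V0S v f ↔ ∀ j : Fin v, ¬ (j : ℕ) < v - f → x j = 0 := Iff.rfl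

lemma fix_iff (hvf : Even (v - f)) (x : Fin v → ZMod 2) :
    phiA v f x = x ↔ x ∈ FixS v f := by
  have hev : (v - f) % 2 = 0 := Nat.even_iff.1 hvf
  constructor
  · intro h j hj
    have hjv := j.isLt
    have heq : ∀ k : Fin v, phiA v f x k = x k := fun k => congrFun h k
    by_cases he : (j : ℕ) % 2 = 0
    · -- use relation at odd index j+1
      have hb : (j : ℕ) + 1 < v := by omega
      have h2 := heq ⟨(j : ℕ) + 1, hb⟩
      rw [phi_even' hvf x j hj he hb] at h2
      -- x j + x j1 = x j1
      have : ∀ a b : ZMod 2, a + b = b → a = 0 := by decide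
      exact this _ _ h2
    · have hb0 : (j : ℕ) - 1 < v := by omega
      set j0 : Fin v := ⟨(j : ℕ) - 1, hb0⟩ with hj0
      have hj0lt : (j0 : ℕ) < v - f := by simp [hj0]; omega
      have hj0e : (j0 : ℕ) % 2 = 0 := by simp [hj0]; omega
      have hb1 : (j0 : ℕ) + 1 < v := by simp [hj0]; omega
      have hjeq : (⟨(j0 : ℕ) + 1, hb1⟩ : Fin v) = j := Fin.ext (by simp [hj0]; omega)
      -- relation at even j0 : x j = x j0 ; relation at odd j : x j0 + x j = x j so x j0 = 0
      have h1 := heq j0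
      rw [phiA_lt_even hvf x j0 hj0lt hj0e hb1, hjeq] at h1
      have h2 := heq j
      have hkey := phi_even' hvf x j0 hj0lt hj0e hb1
      rw [hjeq] at hkey
      rw [hkey] at h2
      -- h2 : x j0 + x j = x j, h1 : x j = x j0
      have : ∀ a b : ZMod 2, a + b = b → b = a → b = 0 := by decide
      exact this _ _ h2 h1
  · intro h
    funext j
    have hjv := j.isLt
    by_cases hj : (j : ℕ) < v - f
    · by_cases he : (j : ℕ) % 2 = 0
      · have hb : (j : ℕ) + 1 < v := by omega
        rw [phiA_lt_even hvf x j hj he hb, h j hj, h ⟨(j : ℕ) + 1, hb⟩ (by simp; omega)]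
      · have hb0 : (j : ℕ) - 1 < v := by omega
        rw [phiA_lt_odd hvf x j hj (by omega) hb0, h j hj, h ⟨(j : ℕ) - 1, hb0⟩ (by simp; omega)]
        decide
    · exact phiA_ge hvf x j hj

lemma v0_iff (hvf : Even (v - f)) (x : Fin v → ZMod 2) :
    x + phiA v f x + phiA v f (phiA v f x) = 0 ↔ x ∈ V0S v f := by
  constructor
  · intro h j hj
    have := congrFun h j
    rw [pi_apply hvf x j, if_neg hj] at this
    exact this
  · intro h
    funext j
    rw [pi_apply hvf x j]
    by_cases hj : (j : ℕ) < v - f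
    · rw [if_pos hj]; rfl
    · rw [if_neg hj]; exact h j hj

lemma pi_mem_FixS (hvf : Even (v - f)) (x : Fin v → ZMod 2) :
    x + phiA v f x + phiA v f (phiA v f x) ∈ FixS v f := by
  intro j hj
  rw [pi_apply hvf x j, if_pos hj]

lemma self_add_pi_mem_V0S (hvf : Even (v - f)) (x : Fin v → ZMod 2) :
    x + (x + phiA v f x + phiA v f (phiA v f x)) ∈ V0S v f := by
  intro j hj
  rw [Pi.add_apply, pi_apply hvf x j, if_neg hj]
  generalize x j = a; revert a; decide

lemma FixS_inf_V0S (hvf : Even (v - f)) : FixS v f ⊓ V0S v f = ⊥ := by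
  rw [eq_bot_iff]
  rintro x ⟨h1, h2⟩
  have : x = 0 := by
    funext j
    by_cases hj : (j : ℕ) < v - f
    · exact h1 j hj
    · exact h2 j hj
  simp [this]

lemma mapMat_eq (W : Submodule (ZMod 2) (Fin v → ZMod 2)) :
    mapMat (Avf v f) W = W.map (phiA v f) := rfl

lemma phi_inj (hvf : Even (v - f)) : Function.Injective (phiA v f) := by
  intro x y h
  have h2 := congrArg (phiA v f) (congrArg (phiA v f) h)
  rwa [phi_phi_phi hvf x, phi_phi_phi hvf y] at h2

lemma mapMat_eq_self_iff (hvf : Even (v - f)) (W : Submodule (ZMod 2) (Fin v → ZMod 2)) :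
    mapMat (Avf v f) W = W ↔ ∀ x ∈ W, phiA v f x ∈ W := by
  rw [mapMat_eq]
  constructor
  · intro h x hx
    rw [← h]
    exact Submodule.mem_map_of_mem hx
  · intro h
    apply le_antisymm
    · rintro y ⟨x, hx, rfl⟩
      exact h x hx
    · intro x hx
      refine ⟨phiA v f (phiA v f x), h _ (h _ hx), ?_⟩
      exact phi_phi_phi hvf x

lemma phi_mem (hvf : Even (v - f)) {W : Submodule (ZMod 2) (Fin v → ZMod 2)}
    (hW : mapMat (Avf v f) W = W) {x} (hx : x ∈ W) : phiA v f x ∈ W :=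
  (mapMat_eq_self_iff hvf W).1 hW x hx

lemma mapMat_span_singleton (x : Fin v → ZMod 2) :
    mapMat (Avf v f) (Submodule.span (ZMod 2) {x})
      = Submodule.span (ZMod 2) {phiA v f x} := by
  rw [mapMat_eq, Submodule.map_span, Set.image_singleton]

lemma pointwiseFixed_iff (hvf : Even (v - f)) (B : Submodule (ZMod 2) (Fin v → ZMod 2)) :
    PointwiseFixed (Avf v f) B ↔ ∀ x ∈ B, phiA v f x = x := by
  constructor
  · intro h x hx
    by_cases hx0 : x = 0
    · simp [hx0]
    · have h1 : Module.finrank (ZMod 2) (Submodule.span (ZMod 2) {x}) = 1 :=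
        finrank_span_singleton hx0
    
      have h2 := h _ h1 ((Submodule.span_singleton_le_iff_mem x B).2 hx)
      rw [mapMat_span_singleton] at h2
      have h3 : phiA v f x ∈ Submodule.span (ZMod 2) {x} := by
        rw [← h2]
        exact Submodule.mem_span_singleton_self _
      obtain ⟨c, hc⟩ := Submodule.mem_span_singleton.1 h3
      rcases (by decide : ∀ c : ZMod 2, c = 0 ∨ c = 1) c with rfl | rfl
      · exfalso
        rw [zero_smul] at hc
        have : x = 0 := by
          have := phi_phi_phi hvf x
          rw [← this, ← hc]
          simp
        exact hx0 this
      · rw [one_smul] at hc; exact hc.symm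
  · intro h P hP1 hPB
    have : ∃ x ∈ P, x ≠ (0 : Fin v → ZMod 2) := by
      by_contra hc
      push_neg at hc
      have : P = ⊥ := by
        rw [eq_bot_iff]; intro x hx; simpa using hc x hx
      rw [this] at hP1
      simp [finrank_bot] at hP1
    obtain ⟨x, hxP, hx0⟩ := this
    have hspan : Submodule.span (ZMod 2) {x} = P := by
      apply Submodule.eq_of_le_of_finrank_eq
      · exact (Submodule.span_singleton_le_iff_mem x P).2 hxP
      · rw [finrank_span_singleton hx0, hP1]
    rw [← hspan, mapMat_span_singleton, h x (hPB hxP)]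

lemma fixed7_iff (hvf : Even (v - f)) (B : Submodule (ZMod 2) (Fin v → ZMod 2)) :
    (mapMat (Avf v f) B = B ∧ PointwiseFixed (Avf v f) B) ↔ B ≤ FixS v f := by
  constructor
  · rintro ⟨h1, h2⟩ x hx
    exact (fix_iff hvf x).1 ((pointwiseFixed_iff hvf B).1 h2 x hx)
  · intro h
    have hfix : ∀ x ∈ B, phiA v f x = x := fun x hx => (fix_iff hvf x).2 (h hx)
    refine ⟨(mapMat_eq_self_iff hvf B).2 fun x hx => ?_, (pointwiseFixed_iff hvf B).2 hfix⟩
    rw [hfix x hx]; exact hx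

lemma triple_dvd {α : Type*} [DecidableEq α] (g : α → α) :
    ∀ (n : ℕ) (s : Finset α), s.card = n → (∀ x ∈ s, g x ∈ s) →
      (∀ x ∈ s, g (g (g x)) = x) → (∀ x ∈ s, g x ≠ x) → 3 ∣ s.card := by
  intro n
  induction n using Nat.strong_induction_on with
  | _ n ih =>
    intro s hn hcl h3 hnf
    rcases s.eq_empty_or_nonempty with rfl | ⟨a, ha⟩
    · simp
    · have hga : g a ∈ s := hcl a ha
      have hgga : g (g a) ∈ s := hcl _ hga
      have hd1 : a ≠ g a := fun h => hnf a ha h.symm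
      have hd2 : a ≠ g (g a) := by
        intro h
        apply hnf a ha
        calc g a = g (g (g a)) := by rw [← h]
        _ = a := h3 a ha
      have hd3 : g a ≠ g (g a) := fun h => hnf (g a) hga h.symm
      set r : Finset α := {a, g a, g (g a)} with hr
      have hrs : r ⊆ s := by
        intro x hx
        simp only [hr, Finset.mem_insert, Finset.mem_singleton] at hx
        rcases hx with rfl | rfl | rfl <;> assumption
      have hrcard : r.card = 3 := by
        rw [hr, Finset.card_insert_of_notMem (by simp [hd1, hd2]),
          Finset.card_insert_of_notMem (by simp [hd3]), Finset.card_singleton]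
      set t := s \ r with ht
      have htcard : t.card = s.card - 3 := by rw [ht, Finset.card_sdiff_of_subset hrs, hrcard]
      have hsge : 3 ≤ s.card := hrcard ▸ Finset.card_le_card hrs
      have hmem_t : ∀ x, x ∈ t ↔ x ∈ s ∧ x ≠ a ∧ x ≠ g a ∧ x ≠ g (g a) := by
        intro x
        simp [ht, hr, Finset.mem_sdiff, and_assoc]
      have hclt : ∀ x ∈ t, g x ∈ t := by
        intro x hx
        rw [hmem_t] at hx ⊢
        obtain ⟨hxs, hx1, hx2, hx3⟩ := hx
        refine ⟨hcl x hxs, ?_, ?_, ?_⟩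
        · intro h
          apply hx3
          conv_lhs => rw [← h3 x hxs]
          rw [h]
        · intro h
          apply hx1
          conv_lhs => rw [← h3 x hxs]
          rw [h, h3 a ha]
        · intro h
          apply hx2
          conv_lhs => rw [← h3 x hxs]
          rw [h]
          exact congrArg g (h3 a ha)
      have h3t : ∀ x ∈ t, g (g (g x)) = x := fun x hx => h3 x (Finset.sdiff_subset hx)
      have hnft : ∀ x ∈ t, g x ≠ x := fun x hx => hnf x (Finset.sdiff_subset hx)
      have hdvd : 3 ∣ t.card := by
        apply ih t.card _ t rfl hclt h3t hnft
        omega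
      omega

lemma card_eq_mul_of_fibers {α β : Type*} [Finite α] [Finite β] (F : α → β) (c : ℕ)
    (h : ∀ b : β, Nat.card {a // F a = b} = c) : Nat.card α = c * Nat.card β := by
  classical
  letI := Fintype.ofFinite α
  letI := Fintype.ofFinite β
  rw [Nat.card_eq_fintype_card, Nat.card_eq_fintype_card]
  rw [← Fintype.card_congr (Equiv.sigmaFiberEquiv F)]
  rw [Fintype.card_sigma]
  have hc : ∀ b : β, Fintype.card {a // F a = b} = c := by
    intro b
    rw [← Nat.card_eq_fintype_card]
    exact h b
  simp only [hc, Finset.sum_const, Finset.card_univ, smul_eq_mul, mul_comm]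

lemma card_two_diff {α : Type*} [Fintype α] [DecidableEq α] (a b : α) (hab : a ≠ b) :
    Fintype.card {y : α // y ≠ a ∧ y ≠ b} = Fintype.card α - 2 := by
  rw [Fintype.card_subtype]
  have : Finset.univ.filter (fun y : α => y ≠ a ∧ y ≠ b) = Finset.univ \ {a, b} := by
    ext y; simp [and_comm]
  rw [this, Finset.card_sdiff_of_subset (by simp), Finset.card_insert_of_notMem (by simp [hab]),
    Finset.card_singleton, Finset.card_univ]

lemma card_pairs {α : Type*} [Fintype α] [DecidableEq α] (a : α) :
    Nat.card {p : α × α // p.1 ≠ a ∧ p.2 ≠ a ∧ p.2 ≠ p.1}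
      = (Fintype.card α - 1) * (Fintype.card α - 2) := by
  classical
  have e : {p : α × α // p.1 ≠ a ∧ p.2 ≠ a ∧ p.2 ≠ p.1}
      ≃ Σ x : {x : α // x ≠ a}, {y : α // y ≠ a ∧ y ≠ x.1} := {
    toFun := fun p => ⟨⟨p.1.1, p.2.1⟩, ⟨p.1.2, p.2.2.1, p.2.2.2⟩⟩
    invFun := fun q => ⟨(q.1.1, q.2.1), q.1.2, q.2.2.1, q.2.2.2⟩
    left_inv := fun p => rfl
    right_inv := fun q => rfl }
  rw [Nat.card_congr e, Nat.card_eq_fintype_card, Fintype.card_sigma]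
  have hc : ∀ x : {x : α // x ≠ a}, Fintype.card {y : α // y ≠ a ∧ y ≠ x.1}
      = Fintype.card α - 2 := fun x => card_two_diff a x.1 (Ne.symm x.2)
  simp only [hc, Finset.sum_const, Finset.card_univ, smul_eq_mul]
  congr 1
  rw [Fintype.card_subtype]
  have : Finset.univ.filter (fun y : α => y ≠ a) = Finset.univ \ {a} := by
    ext y; simp
  rw [this, Finset.card_sdiff_of_subset (by simp), Finset.card_singleton, Finset.card_univ]

instance : Finite (Submodule (ZMod 2) (Fin v → ZMod 2)) :=
  Finite.of_injective (fun W => (W : Set (Fin v → ZMod 2))) SetLike.coe_injective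

lemma card_submodule (W : Submodule (ZMod 2) (Fin v → ZMod 2)) :
    Nat.card W = 2 ^ Module.finrank (ZMod 2) W := by
  classical
  letI : Fintype W := Fintype.ofFinite W
  rw [Nat.card_eq_fintype_card, Module.card_eq_pow_finrank (K := ZMod 2), ZMod.card]

lemma card_FixS (hfv : f ≤ v) : Nat.card (FixS v f) = 2 ^ f := by
  have e : (FixS v f) ≃ (Fin f → ZMod 2) := {
    toFun := fun x i => x.1 ⟨v - f + (i : ℕ), by omega⟩
    invFun := fun y => ⟨fun j => if h : (j : ℕ) < v - f then 0
        else y ⟨(j : ℕ) - (v - f), by have := j.isLt; omega⟩,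
      fun j hj => dif_pos hj⟩
    left_inv := fun x => by
      apply Subtype.ext
      funext j
      by_cases hj : (j : ℕ) < v - f
      · simp only [dif_pos hj]
        exact (x.2 j hj).symm
      · simp only [dif_neg hj]
        apply congrArg
        apply Fin.ext
        show v - f + ((j : ℕ) - (v - f)) = (j : ℕ)
        have := j.isLt
        omega
    right_inv := fun y => by
      funext i
      simp only
      rw [dif_neg (by show ¬ (v - f + (i : ℕ) < v - f); omega)]
      apply congrArg
      apply Fin.ext
      show v - f + (i : ℕ) - (v - f) = (i : ℕ)
      omega }
  rw [Nat.card_congr e]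
  simp [Nat.card_eq_fintype_card, ZMod.card]

lemma card_V0S : Nat.card (V0S v f) = 2 ^ (v - f) := by
  have e : (V0S v f) ≃ (Fin (v - f) → ZMod 2) := {
    toFun := fun x i => x.1 ⟨(i : ℕ), by have := i.isLt; omega⟩
    invFun := fun y => ⟨fun j => if h : (j : ℕ) < v - f then y ⟨(j : ℕ), h⟩ else 0,
      fun j hj => dif_neg hj⟩
    left_inv := fun x => by
      apply Subtype.ext
      funext j
      by_cases hj : (j : ℕ) < v - f
      · simp only [dif_pos hj]
      · simp only [dif_neg hj]
        exact (x.2 j hj).symm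
    right_inv := fun y => by
      funext i
      simp only
      rw [dif_pos (show ((⟨(i : ℕ), by have := i.isLt; omega⟩ : Fin v) : ℕ) < v - f from i.isLt)] }
  rw [Nat.card_congr e]
  simp [Nat.card_eq_fintype_card, ZMod.card]

lemma card_ne_elt {α : Type*} [Finite α] (a : α) :
    Nat.card {x : α // x ≠ a} = Nat.card α - 1 := by
  classical
  letI := Fintype.ofFinite α
  rw [Nat.card_eq_fintype_card, Nat.card_eq_fintype_card, Fintype.card_subtype]
  have : Finset.univ.filter (fun y : α => y ≠ a) = Finset.univ \ {a} := by
    ext y; simp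
  rw [this, Finset.card_sdiff_of_subset (by simp), Finset.card_singleton, Finset.card_univ]

lemma neg_self_eq (x : Fin v → ZMod 2) : -x = x := by
  funext j
  rw [Pi.neg_apply]
  generalize x j = a
  revert a; decide

lemma v0_phi_mem (hvf : Even (v - f)) {x : Fin v → ZMod 2} (hx : x ∈ V0S v f) :
    phiA v f x ∈ V0S v f := by
  rw [← v0_iff hvf] at hx ⊢
  rw [phi_phi_phi hvf x]
  rw [← hx]
  abel

lemma phi_ne_zero (hvf : Even (v - f)) {x : Fin v → ZMod 2} (hx : x ≠ 0) :
    phiA v f x ≠ 0 := by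
  intro h
  apply hx
  have := congrArg (fun z => phiA v f (phiA v f z)) h
  simp only [map_zero] at this
  rwa [phi_phi_phi hvf x] at this

lemma card_inf_V0 (hvf : Even (v - f)) {B : Submodule (ZMod 2) (Fin v → ZMod 2)}
    (hB3 : Module.finrank (ZMod 2) B = 3) (hBinv : mapMat (Avf v f) B = B) :
    (B ⊓ V0S v f = ⊥) ∨ Nat.card (B ⊓ V0S v f : Submodule (ZMod 2) (Fin v → ZMod 2)) = 4 := by
  classical
  set W := B ⊓ V0S v f with hW
  by_cases hbot : W = ⊥
  · exact Or.inl hbot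
  right
  have hWcl : ∀ x ∈ W, phiA v f x ∈ W := fun x hx =>
    ⟨phi_mem hvf hBinv hx.1, v0_phi_mem hvf hx.2⟩
  -- 3 ∣ Nat.card W - 1
  letI : Fintype W := Fintype.ofFinite W
  have hdvd : 3 ∣ Fintype.card W - 1 := by
    set g : W → W := fun w => ⟨phiA v f w.1, hWcl w.1 w.2⟩ with hg
    set s : Finset W := Finset.univ.erase 0 with hs
    have hscard : s.card = Fintype.card W - 1 := by
      rw [hs, Finset.card_erase_of_mem (Finset.mem_univ _), Finset.card_univ]
    rw [← hscard]
    apply triple_dvd g s.card s rfl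
    · intro x hx
      simp only [hs, Finset.mem_erase, Finset.mem_univ, and_true] at hx ⊢
      intro h
      have hval : phiA v f x.1 = 0 := congrArg Subtype.val h
      exact phi_ne_zero hvf (fun h0 => hx (Subtype.ext h0)) hval
    · intro x _
      exact Subtype.ext (phi_phi_phi hvf x.1)
    · intro x hx
      simp only [hs, Finset.mem_erase, Finset.mem_univ, and_true] at hx
      intro h
      apply hx
      apply Subtype.ext
      have heq : phiA v f x.1 = x.1 := congrArg Subtype.val h
      have hmem : x.1 ∈ FixS v f ⊓ V0S v f := ⟨(fix_iff hvf x.1).1 heq, x.2.2⟩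
      rw [FixS_inf_V0S hvf] at hmem
      exact hmem
  -- card W = 2 ^ k with bounds
  have hcard : Nat.card W = 2 ^ Module.finrank (ZMod 2) W := card_submodule W
  have hle : Nat.card W ≤ Nat.card B := by
    apply Nat.card_le_card_of_injective (Submodule.inclusion (inf_le_left : W ≤ B))
    exact Submodule.inclusion_injective _
  have hcardB : Nat.card B = 8 := by
    rw [card_submodule B, hB3]
    norm_num
  have hnontriv : 1 < Nat.card W := by
    rw [Nat.card_eq_fintype_card]
    rw [Fintype.one_lt_card_iff_nontrivial]
    obtain ⟨x, hxW, hx0⟩ := Submodule.exists_mem_ne_zero_of_ne_bot hbot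
    exact ⟨⟨x, hxW⟩, 0, by simp [Subtype.ext_iff, hx0]⟩
  have hdvd' : 3 ∣ Nat.card W - 1 := by rwa [Nat.card_eq_fintype_card]
  set k := Module.finrank (ZMod 2) W with hk
  have hkle : 2 ^ k ≤ 8 := by rw [← hcard, ← hcardB]; exact hle
  have hk3 : k ≤ 3 := by
    by_contra hgt
    push_neg at hgt
    have : 2 ^ 4 ≤ 2 ^ k := Nat.pow_le_pow_right (by norm_num) hgt
    omega
  rw [hcard] at hdvd' hnontriv ⊢
  interval_cases k <;> omega

lemma le_fix_of_inf_bot (hvf : Even (v - f)) {B : Submodule (ZMod 2) (Fin v → ZMod 2)}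
    (hBinv : mapMat (Avf v f) B = B) (hW : B ⊓ V0S v f = ⊥) : B ≤ FixS v f := by
  intro x hx
  have h1 : x + (x + phiA v f x + phiA v f (phiA v f x)) ∈ V0S v f :=
    self_add_pi_mem_V0S hvf x
  have h2 : x + (x + phiA v f x + phiA v f (phiA v f x)) ∈ B := by
    apply Submodule.add_mem _ hx
    exact Submodule.add_mem _ (Submodule.add_mem _ hx (phi_mem hvf hBinv hx))
      (phi_mem hvf hBinv (phi_mem hvf hBinv hx))
  have h3 : x + (x + phiA v f x + phiA v f (phiA v f x)) = 0 := by
    have : x + (x + phiA v f x + phiA v f (phiA v f x)) ∈ B ⊓ V0S v f := ⟨h2, h1⟩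
    rwa [hW, Submodule.mem_bot] at this
  have h4 : x = x + phiA v f x + phiA v f (phiA v f x) := by
    have h5 := eq_neg_of_add_eq_zero_left h3
    rwa [neg_self_eq] at h5
  rw [h4]
  exact pi_mem_FixS hvf x

lemma card_inf_mul_le (hvf : Even (v - f)) {B : Submodule (ZMod 2) (Fin v → ZMod 2)} :
    Nat.card (B ⊓ FixS v f : Submodule (ZMod 2) (Fin v → ZMod 2))
      * Nat.card (B ⊓ V0S v f : Submodule (ZMod 2) (Fin v → ZMod 2)) ≤ Nat.card B := by
  set P := B ⊓ FixS v f with hP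
  set W := B ⊓ V0S v f with hWd
  rw [← Nat.card_prod]
  apply Nat.card_le_card_of_injective
    (f := fun pq : P × W => (⟨pq.1.1 + pq.2.1, Submodule.add_mem B pq.1.2.1 pq.2.2.1⟩ : B))
  rintro ⟨⟨p, hp⟩, ⟨w, hw⟩⟩ ⟨⟨p', hp'⟩, ⟨w', hw'⟩⟩ h
  have h' : p + w = p' + w' := congrArg Subtype.val h
  have hkey : p - p' = w' - w :=
    sub_eq_sub_iff_add_eq_add.2 (by rw [h']; exact add_comm _ _)
  have hmem : p - p' ∈ FixS v f ⊓ V0S v f := by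
    refine ⟨Submodule.sub_mem _ hp.2 hp'.2, ?_⟩
    rw [hkey]
    exact Submodule.sub_mem _ hw'.2 hw.2
  rw [FixS_inf_V0S hvf, Submodule.mem_bot, sub_eq_zero] at hmem
  have hww : w = w' := by
    rw [hmem, sub_self] at hkey
    exact (sub_eq_zero.1 hkey.symm).symm
  subst hmem hww
  rfl

lemma finrank_pair {x y : Fin v → ZMod 2} (hx : x ≠ 0) (hy : y ≠ 0) (hyx : y ≠ x) :
    Module.finrank (ZMod 2) (Submodule.span (ZMod 2) ({x, y} : Set (Fin v → ZMod 2))) = 2 := by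
  have hli : LinearIndependent (ZMod 2) ![x, y] := by
    rw [linearIndependent_fin2]
    constructor
    · first | simpa using hy | simpa using hy.symm
    · intro a
      rcases (by decide : ∀ c : ZMod 2, c = 0 ∨ c = 1) a with rfl | rfl
      · first | simpa using hx | simpa using hx.symm
      · simp only [Matrix.cons_val_one, Matrix.head_cons, Matrix.cons_val_zero, one_smul]
        first | exact fun h => hyx h.symm | exact fun h => hyx h
  have hr : Set.range ![x, y] = {x, y} := by
    ext z
    simp only [Set.mem_range, Fin.exists_fin_two, Set.mem_insert_iff, Set.mem_singleton_iff]
    simp only [Matrix.cons_val_zero, Matrix.cons_val_one, Matrix.head_cons]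
    tauto
  have h2 := finrank_span_eq_card hli
  rw [hr] at h2
  simpa using h2

lemma count1 (hvf : Even (v - f)) {D : Set (Submodule (ZMod 2) (Fin v → ZMod 2))}
    (hD : IsSTS v D) (hinv : (mapMat (Avf v f)) '' D = D) :
    3 * Nat.card {B : Submodule (ZMod 2) (Fin v → ZMod 2) |
        B ∈ D ∧ mapMat (Avf v f) B = B ∧ ¬ PointwiseFixed (Avf v f) B}
      = 2 ^ (v - f) - 1 := by
  classical
  set T1 := {B : Submodule (ZMod 2) (Fin v → ZMod 2) |
      B ∈ D ∧ mapMat (Avf v f) B = B ∧ ¬ PointwiseFixed (Avf v f) B} with hT1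
  have hDinv : ∀ B ∈ D, mapMat (Avf v f) B ∈ D := by
    intro B hB; rw [← hinv]; exact ⟨B, hB, rfl⟩
  have huniq : ∀ {L B B' : Submodule (ZMod 2) (Fin v → ZMod 2)},
      Module.finrank (ZMod 2) L = 2 → B ∈ D → L ≤ B → B' ∈ D → L ≤ B' → B = B' := by
    intro L B B' hL hB hLB hB' hLB'
    exact ExistsUnique.unique (hD.2 L hL) ⟨hB, hLB⟩ ⟨hB', hLB'⟩
  set dom := {x : Fin v → ZMod 2 // x ∈ V0S v f ∧ x ≠ 0} with hdom
  have hxfix : ∀ x : dom, phiA v f x.1 ≠ x.1 := by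
    intro x h
    have : x.1 ∈ FixS v f ⊓ V0S v f := ⟨(fix_iff hvf x.1).1 h, x.2.1⟩
    rw [FixS_inf_V0S hvf, Submodule.mem_bot] at this
    exact x.2.2 this
  have hsum : ∀ x : dom, phiA v f (phiA v f x.1) = x.1 + phiA v f x.1 := by
    intro x
    have h0 : x.1 + phiA v f x.1 + phiA v f (phiA v f x.1) = 0 := (v0_iff hvf x.1).2 x.2.1
    have := eq_neg_of_add_eq_zero_right h0
    rwa [neg_self_eq] at this
  have hLx : ∀ x : dom, Module.finrank (ZMod 2)
      (Submodule.span (ZMod 2) ({x.1, phiA v f x.1} : Set (Fin v → ZMod 2))) = 2 :=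
    fun x => finrank_pair x.2.2 (phi_ne_zero hvf x.2.2) (hxfix x)
  have hFex : ∀ x : dom, ∃ B : T1, x.1 ∈ (B : Submodule (ZMod 2) (Fin v → ZMod 2)) := by
    intro x
    set L := Submodule.span (ZMod 2) ({x.1, phiA v f x.1} : Set (Fin v → ZMod 2)) with hL
    obtain ⟨B₀, ⟨hB₀D, hB₀L⟩⟩ := (hD.2 L (hLx x)).exists
    have hxB₀ : x.1 ∈ B₀ := hB₀L (Submodule.subset_span (by simp))
    have hpxB₀ : phiA v f x.1 ∈ B₀ := hB₀L (Submodule.subset_span (by simp))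
    have hB₀inv : mapMat (Avf v f) B₀ = B₀ := by
      have hle : L ≤ mapMat (Avf v f) B₀ := by
        rw [hL, Submodule.span_le, mapMat_eq]
        have hmem2 : phiA v f (phiA v f x.1) ∈ B₀ := by
          rw [hsum x]
          exact Submodule.add_mem _ hxB₀ hpxB₀
        rintro z hz
        rcases hz with rfl | rfl
        · exact Submodule.mem_map.2 ⟨phiA v f (phiA v f x.1), hmem2, phi_phi_phi hvf x.1⟩
        · exact Submodule.mem_map_of_mem hxB₀
      exact huniq (hLx x) (hDinv B₀ hB₀D) hle hB₀D hB₀L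
    have hB₀np : ¬ PointwiseFixed (Avf v f) B₀ := fun hp =>
      hxfix x ((pointwiseFixed_iff hvf B₀).1 hp x.1 hxB₀)
    exact ⟨⟨B₀, hB₀D, hB₀inv, hB₀np⟩, hxB₀⟩
  choose F hF using hFex
  have hmemuniq : ∀ (x : dom) (B B' : T1),
      x.1 ∈ (B : Submodule (ZMod 2) (Fin v → ZMod 2)) →
      x.1 ∈ (B' : Submodule (ZMod 2) (Fin v → ZMod 2)) → B = B' := by
    intro x B B' hxB hxB'
    have hle : ∀ C : T1, x.1 ∈ (C : Submodule (ZMod 2) (Fin v → ZMod 2)) →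
        Submodule.span (ZMod 2) ({x.1, phiA v f x.1} : Set (Fin v → ZMod 2))
          ≤ (C : Submodule (ZMod 2) (Fin v → ZMod 2)) := by
      intro C hxC
      rw [Submodule.span_le]
      rintro z (rfl | rfl)
      · exact hxC
      · exact phi_mem hvf C.2.2.1 hxC
    exact Subtype.ext (huniq (hLx x) B.2.1 (hle B hxB) B'.2.1 (hle B' hxB'))
  have hfiber : ∀ b : T1, Nat.card {x : dom // F x = b} = 3 := by
    intro b
    set W := (b : Submodule (ZMod 2) (Fin v → ZMod 2)) ⊓ V0S v f with hW
    have hFb : ∀ x : dom, F x = b ↔ x.1 ∈ (b : Submodule (ZMod 2) (Fin v → ZMod 2)) := by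
      intro x
      constructor
      · rintro rfl; exact hF x
      · intro hxb; exact hmemuniq x (F x) b (hF x) hxb
    have e : {x : dom // F x = b} ≃ {w : W // w ≠ 0} := {
      toFun := fun p => ⟨⟨p.1.1, ⟨(hFb p.1).1 p.2, p.1.2.1⟩⟩,
        fun h => p.1.2.2 (congrArg Subtype.val h)⟩
      invFun := fun w => ⟨⟨w.1.1, ⟨w.1.2.2, fun h => w.2 (Subtype.ext h)⟩⟩,
        (hFb _).2 w.1.2.1⟩
      left_inv := fun p => by apply Subtype.ext; apply Subtype.ext; rfl
      right_inv := fun w => by apply Subtype.ext; apply Subtype.ext; rfl }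
    rw [Nat.card_congr e, card_ne_elt]
    have hW4 : Nat.card W = 4 := by
      rcases card_inf_V0 hvf (hD.1 b.1 b.2.1) b.2.2.1 with hbot | h4
      · exfalso
        obtain ⟨z, hzb, hzf⟩ : ∃ z ∈ (b : Submodule (ZMod 2) (Fin v → ZMod 2)),
            phiA v f z ≠ z := by
          by_contra hc
          push_neg at hc
          exact b.2.2.2 ((pointwiseFixed_iff hvf _).2 hc)
        set w₀ := z + (z + phiA v f z + phiA v f (phiA v f z)) with hw₀
        have hw₀V : w₀ ∈ V0S v f := self_add_pi_mem_V0S hvf z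
        have hw₀b : w₀ ∈ (b : Submodule (ZMod 2) (Fin v → ZMod 2)) := by
          apply Submodule.add_mem _ hzb
          exact Submodule.add_mem _
            (Submodule.add_mem _ hzb (phi_mem hvf b.2.2.1 hzb))
            (phi_mem hvf b.2.2.1 (phi_mem hvf b.2.2.1 hzb))
        have hw₀0 : w₀ ≠ 0 := by
          intro h0
          apply hzf
          have h5 := eq_neg_of_add_eq_zero_left h0
          rw [neg_self_eq] at h5
          have h6 : z ∈ FixS v f := by rw [h5]; exact pi_mem_FixS hvf z
          exact (fix_iff hvf z).2 h6
        have hmemW : w₀ ∈ W := ⟨hw₀b, hw₀V⟩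
        rw [hW, hbot] at hmemW
        exact hw₀0 ((Submodule.mem_bot _).1 hmemW)
      · first | exact h4 | (rw [hW]; exact h4)
    rw [hW4]
  have hcards : Nat.card dom = 3 * Nat.card T1 := card_eq_mul_of_fibers F 3 hfiber
  have hdomcard : Nat.card dom = 2 ^ (v - f) - 1 := by
    have e : dom ≃ {y : V0S v f // y ≠ 0} := {
      toFun := fun x => ⟨⟨x.1, x.2.1⟩, fun h => x.2.2 (congrArg Subtype.val h)⟩
      invFun := fun y => ⟨y.1.1, y.1.2, fun h => y.2 (Subtype.ext h)⟩
      left_inv := fun x => rfl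
      right_inv := fun y => by apply Subtype.ext; apply Subtype.ext; rfl }
    rw [Nat.card_congr e, card_ne_elt, card_V0S]
  rw [← hdomcard, hcards]

lemma count7 (hvf : Even (v - f)) (hfv : f ≤ v) {D : Set (Submodule (ZMod 2) (Fin v → ZMod 2))}
    (hD : IsSTS v D) (hinv : (mapMat (Avf v f)) '' D = D) :
    42 * Nat.card {B : Submodule (ZMod 2) (Fin v → ZMod 2) |
        B ∈ D ∧ mapMat (Avf v f) B = B ∧ PointwiseFixed (Avf v f) B}
      = (2 ^ f - 1) * (2 ^ f - 2) := by
  classical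
  set T7 := {B : Submodule (ZMod 2) (Fin v → ZMod 2) |
      B ∈ D ∧ mapMat (Avf v f) B = B ∧ PointwiseFixed (Avf v f) B} with hT7
  have hDinv : ∀ B ∈ D, mapMat (Avf v f) B ∈ D := by
    intro B hB; rw [← hinv]; exact ⟨B, hB, rfl⟩
  have huniq : ∀ {L B B' : Submodule (ZMod 2) (Fin v → ZMod 2)},
      Module.finrank (ZMod 2) L = 2 → B ∈ D → L ≤ B → B' ∈ D → L ≤ B' → B = B' := by
    intro L B B' hL hB hLB hB' hLB'
    exact ExistsUnique.unique (hD.2 L hL) ⟨hB, hLB⟩ ⟨hB', hLB'⟩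
  set dom := {p : (Fin v → ZMod 2) × (Fin v → ZMod 2) //
      p.1 ∈ FixS v f ∧ p.2 ∈ FixS v f ∧ p.1 ≠ 0 ∧ p.2 ≠ 0 ∧ p.2 ≠ p.1} with hdom
  have hLp : ∀ p : dom, Module.finrank (ZMod 2)
      (Submodule.span (ZMod 2) ({p.1.1, p.1.2} : Set (Fin v → ZMod 2))) = 2 :=
    fun p => finrank_pair p.2.2.2.1 p.2.2.2.2.1 p.2.2.2.2.2
  have hT7iff : ∀ B : Submodule (ZMod 2) (Fin v → ZMod 2),
      B ∈ T7 ↔ B ∈ D ∧ B ≤ FixS v f := by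
    intro B
    constructor
    · rintro ⟨h1, h2, h3⟩; exact ⟨h1, (fixed7_iff hvf B).1 ⟨h2, h3⟩⟩
    · rintro ⟨h1, h2⟩
      obtain ⟨h3, h4⟩ := (fixed7_iff hvf B).2 h2
      exact ⟨h1, h3, h4⟩
  have hFex : ∀ p : dom, ∃ B : T7,
      p.1.1 ∈ (B : Submodule (ZMod 2) (Fin v → ZMod 2)) ∧
      p.1.2 ∈ (B : Submodule (ZMod 2) (Fin v → ZMod 2)) := by
    intro p
    set L := Submodule.span (ZMod 2) ({p.1.1, p.1.2} : Set (Fin v → ZMod 2)) with hLdef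
    obtain ⟨B₀, ⟨hB₀D, hB₀L⟩⟩ := (hD.2 L (hLp p)).exists
    have hx : p.1.1 ∈ B₀ := hB₀L (Submodule.subset_span (by simp))
    have hy : p.1.2 ∈ B₀ := hB₀L (Submodule.subset_span (by simp))
    have hfixx : phiA v f p.1.1 = p.1.1 := (fix_iff hvf _).2 p.2.1
    have hfixy : phiA v f p.1.2 = p.1.2 := (fix_iff hvf _).2 p.2.2.1
    have hB₀inv : mapMat (Avf v f) B₀ = B₀ := by
      have hle : L ≤ mapMat (Avf v f) B₀ := by
        rw [hLdef, Submodule.span_le, mapMat_eq]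
        rintro z hz
        rcases hz with rfl | rfl
        · exact Submodule.mem_map.2 ⟨p.1.1, hx, hfixx⟩
        · exact Submodule.mem_map.2 ⟨p.1.2, hy, hfixy⟩
      exact huniq (hLp p) (hDinv B₀ hB₀D) hle hB₀D hB₀L
    have hBfix : B₀ ≤ FixS v f := by
      rcases card_inf_V0 hvf (hD.1 B₀ hB₀D) hB₀inv with hbot | h4
      · exact le_fix_of_inf_bot hvf hB₀inv hbot
      · exfalso
        have hle8 := card_inf_mul_le (B := B₀) hvf
        rw [h4, card_submodule B₀, hD.1 B₀ hB₀D] at hle8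
        have hP3 : 3 ≤ Nat.card (B₀ ⊓ FixS v f : Submodule (ZMod 2) (Fin v → ZMod 2)) := by
          letI := Fintype.ofFinite (B₀ ⊓ FixS v f : Submodule (ZMod 2) (Fin v → ZMod 2))
          rw [Nat.card_eq_fintype_card]
          set a0 : (B₀ ⊓ FixS v f : Submodule (ZMod 2) (Fin v → ZMod 2)) := 0 with ha0
          set a1 : (B₀ ⊓ FixS v f : Submodule (ZMod 2) (Fin v → ZMod 2)) :=
            ⟨p.1.1, ⟨hx, p.2.1⟩⟩ with ha1
          set a2 : (B₀ ⊓ FixS v f : Submodule (ZMod 2) (Fin v → ZMod 2)) :=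
            ⟨p.1.2, ⟨hy, p.2.2.1⟩⟩ with ha2
          have hcard3 : ({a0, a1, a2} : Finset _).card = 3 := by
            rw [Finset.card_insert_of_notMem, Finset.card_insert_of_notMem,
              Finset.card_singleton]
            · simp only [Finset.mem_singleton]
              intro h
              exact p.2.2.2.2.2 (congrArg Subtype.val h).symm
            · simp only [Finset.mem_insert, Finset.mem_singleton]
              rintro (h | h)
              · exact p.2.2.2.1 (congrArg Subtype.val h).symm
              · exact p.2.2.2.2.1 (congrArg Subtype.val h).symm
          calc 3 = ({a0, a1, a2} : Finset _).card := hcard3.symm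
          _ ≤ Fintype.card (B₀ ⊓ FixS v f : Submodule (ZMod 2) (Fin v → ZMod 2)) :=
            Finset.card_le_univ _
        omega
    exact ⟨⟨B₀, (hT7iff B₀).2 ⟨hB₀D, hBfix⟩⟩, hx, hy⟩
  choose F hF using hFex
  have hmemuniq : ∀ (p : dom) (B B' : T7),
      p.1.1 ∈ (B : Submodule (ZMod 2) (Fin v → ZMod 2)) →
      p.1.2 ∈ (B : Submodule (ZMod 2) (Fin v → ZMod 2)) →
      p.1.1 ∈ (B' : Submodule (ZMod 2) (Fin v → ZMod 2)) →
      p.1.2 ∈ (B' : Submodule (ZMod 2) (Fin v → ZMod 2)) → B = B' := by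
    intro p B B' h1 h2 h1' h2'
    apply Subtype.ext
    refine huniq (hLp p) B.2.1 ?_ B'.2.1 ?_ <;>
      (rw [Submodule.span_le]; rintro z hz; rcases hz with rfl | rfl)
    · exact h1
    · exact h2
    · exact h1'
    · exact h2'
  have hfiber : ∀ b : T7, Nat.card {p : dom // F p = b} = 42 := by
    intro b
    have hbD : b.1 ∈ D := b.2.1
    have hbfix : b.1 ≤ FixS v f := ((hT7iff b.1).1 b.2).2
    have hFb : ∀ p : dom, F p = b ↔
        (p.1.1 ∈ (b : Submodule (ZMod 2) (Fin v → ZMod 2)) ∧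
         p.1.2 ∈ (b : Submodule (ZMod 2) (Fin v → ZMod 2))) := by
      intro p
      constructor
      · rintro rfl; exact hF p
      · rintro ⟨h1, h2⟩; exact hmemuniq p (F p) b (hF p).1 (hF p).2 h1 h2
    have e : {p : dom // F p = b} ≃
        {q : ↥(b : Submodule (ZMod 2) (Fin v → ZMod 2)) ×
             ↥(b : Submodule (ZMod 2) (Fin v → ZMod 2)) //
          q.1 ≠ 0 ∧ q.2 ≠ 0 ∧ q.2 ≠ q.1} := {
      toFun := fun p => ⟨(⟨p.1.1.1, ((hFb p.1).1 p.2).1⟩, ⟨p.1.1.2, ((hFb p.1).1 p.2).2⟩),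
        fun h => p.1.2.2.2.1 (congrArg Subtype.val h),
        fun h => p.1.2.2.2.2.1 (congrArg Subtype.val h),
        fun h => p.1.2.2.2.2.2 (congrArg Subtype.val h)⟩
      invFun := fun q => ⟨⟨(q.1.1.1, q.1.2.1),
          hbfix q.1.1.2, hbfix q.1.2.2,
          fun h => q.2.1 (Subtype.ext h), fun h => q.2.2.1 (Subtype.ext h),
          fun h => q.2.2.2 (Subtype.ext h)⟩,
        (hFb _).2 ⟨q.1.1.2, q.1.2.2⟩⟩
      left_inv := fun p => by apply Subtype.ext; apply Subtype.ext; rfl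
      right_inv := fun q => by
        apply Subtype.ext
        apply Prod.ext <;> apply Subtype.ext <;> rfl }
    rw [Nat.card_congr e]
    letI := Fintype.ofFinite (b : Submodule (ZMod 2) (Fin v → ZMod 2))
    have h8 : Fintype.card (b : Submodule (ZMod 2) (Fin v → ZMod 2)) = 8 := by
      rw [← Nat.card_eq_fintype_card, card_submodule, hD.1 b.1 hbD]
      norm_num
    rw [card_pairs 0, h8]
  have hcards : Nat.card dom = 42 * Nat.card T7 := card_eq_mul_of_fibers F 42 hfiber
  have hdomcard : Nat.card dom = (2 ^ f - 1) * (2 ^ f - 2) := by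
    have e : dom ≃ {q : ↥(FixS v f) × ↥(FixS v f) // q.1 ≠ 0 ∧ q.2 ≠ 0 ∧ q.2 ≠ q.1} := {
      toFun := fun x => ⟨(⟨x.1.1, x.2.1⟩, ⟨x.1.2, x.2.2.1⟩),
        fun h => x.2.2.2.1 (congrArg Subtype.val h),
        fun h => x.2.2.2.2.1 (congrArg Subtype.val h),
        fun h => x.2.2.2.2.2 (congrArg Subtype.val h)⟩
      invFun := fun q => ⟨(q.1.1.1, q.1.2.1),
        q.1.1.2, q.1.2.2,
        fun h => q.2.1 (Subtype.ext h), fun h => q.2.2.1 (Subtype.ext h),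
        fun h => q.2.2.2 (Subtype.ext h)⟩
      left_inv := fun x => by apply Subtype.ext; rfl
      right_inv := fun q => by
        apply Subtype.ext
        apply Prod.ext <;> apply Subtype.ext <;> rfl }
    rw [Nat.card_congr e]
    letI := Fintype.ofFinite (FixS v f)
    have hcf : Fintype.card (FixS v f) = 2 ^ f := by
      rw [← Nat.card_eq_fintype_card, card_FixS hfv]
    rw [card_pairs 0, hcf]
  rw [← hdomcard, hcards]

/-- For an `STS_2(v)` invariant under `A_{v,f}`, the number of blocks that are fixed
planes of type 7 equals `(2^f - 1)(2^{f-1} - 1)/21`, and the number of blocks that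
are fixed planes of type 1 equals `(2^{v-f} - 1)/3`. -/
theorem stmt11 (v f : ℕ) (hf : f ≤ v - 1) (hvf : Even (v - f))
    (D : Set (Submodule (ZMod 2) (Fin v → ZMod 2))) (hD : IsSTS v D)
    (hinv : (mapMat (Avf v f)) '' D = D) :
    Nat.card {B : Submodule (ZMod 2) (Fin v → ZMod 2) |
        B ∈ D ∧ mapMat (Avf v f) B = B ∧ PointwiseFixed (Avf v f) B}
      = (2 ^ f - 1) * (2 ^ (f - 1) - 1) / 21 ∧
    Nat.card {B : Submodule (ZMod 2) (Fin v → ZMod 2) |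
        B ∈ D ∧ mapMat (Avf v f) B = B ∧ ¬ PointwiseFixed (Avf v f) B}
      = (2 ^ (v - f) - 1) / 3 := by
  have hfv : f ≤ v := by omega
  have h7 := count7 hvf hfv hD hinv
  have h1 := count1 hvf hD hinv
  constructor
  · by_cases hf0 : f = 0
    · subst hf0
      simp only [pow_zero] at h7
      have hz : ((2:ℕ) ^ 0 - 1) * ((2:ℕ) ^ (0 - 1) - 1) / 21 = 0 := by norm_num
      rw [hz]
      omega
    · have hp : (2:ℕ) ^ f = 2 ^ (f - 1) * 2 := by
        conv_lhs => rw [show f = (f - 1) + 1 by omega]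
        rw [pow_succ]
      have ha : 1 ≤ (2:ℕ) ^ (f - 1) := Nat.one_le_two_pow
      have h2 : (2:ℕ) ^ f - 2 = 2 * ((2:ℕ) ^ (f - 1) - 1) := by omega
      have key : ((2:ℕ) ^ f - 1) * (2 * ((2:ℕ) ^ (f - 1) - 1))
          = 2 * (((2:ℕ) ^ f - 1) * ((2:ℕ) ^ (f - 1) - 1)) := mul_left_comm _ _ _
      rw [h2, key] at h7
      generalize hM : ((2:ℕ) ^ f - 1) * ((2:ℕ) ^ (f - 1) - 1) = M at h7 ⊢
      omega
  · generalize hK : (2:ℕ) ^ (v - f) = K at h1 ⊢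
    omega
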